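/- Let n ≥ 1 and for each i = 1, …, n let d_i ≥ 0, c_i ∈ ℝ, h_i > 0, and let D_i be the trapezoidal fuzzy variable (a_i − α_i, a_i, b_i, b_i + β_i) with α_i > 0, β_i > 0, 0 < a_i − α_i, and a_i ≤ b_i. For λ = 1/2 (the credibilistic case), set e_i = ∫_0^∞ m_{1/2}(D_i ≤ 1/r) dr and f(x) = Σ_{i=1}^n (d_i·x_i − c_i − (h_i·x_i²/2)·e_i). Then f(y) ≤ f(x*) for every y ∈ ℝⁿ with y_i ≥ 0, where x_i* = 2·d_i / ( h_i·[ (1/α_i)·ln(a_i/(a_i − α_i)) + (1/β_i)·ln((b_i + β_i)/b_i) ] ). -/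

import Mathlib

/-!
The trapezoidal membership function is `min (L x) (1 - R x)`, where `L` and `R` are the clamped
affine ramps rising from `0` to `1` on `[a - α, a]` and on `[b, b + β]`. Hence
`Pos {D ≤ t} = L t` and `Nec {D ≤ t} = R t`, so the credibility of `{D ≤ t}` is `(L t + R t) / 2`.
For a ramp rising on `[p, q]` with `0 < p`, `∫₀^∞ ramp (1 / r) dr = log (q / p) / (q - p)`, so
`e_i` is half the bracket in the formula for `x_i*`. Each summand of the profit is then the
concave parabola `d y - (h e / 2) y²`, maximal at its vertex `y = d / (h e) = x_i*`.
-/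

open MeasureTheory Set

/-- Possibility measure of an event `A` built from membership function `μ`
(with the convention `sSup ∅ = 0`, which holds for `Real.sSup`). -/
noncomputable def Pos (μ : ℝ → ℝ) (A : Set ℝ) : ℝ := sSup (μ '' A)

/-- Necessity measure associated with `μ`. -/
noncomputable def Nec (μ : ℝ → ℝ) (A : Set ℝ) : ℝ := 1 - Pos μ Aᶜ

/-- The parametric measure `m_λ(A) = λ·Pos(A) + (1−λ)·Nec(A)`. -/
noncomputable def mMeas (l : ℝ) (μ : ℝ → ℝ) (A : Set ℝ) : ℝ :=
  l * Pos μ A + (1 - l) * Nec μ A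

/-- The `m_λ`-expected value of the fuzzy variable with membership function `μ`:
`E_λ(ξ) = ∫_{−∞}^0 (m_λ([r,∞)) − 1) dr + ∫_0^∞ m_λ([r,∞)) dr`. -/
noncomputable def Eexp (l : ℝ) (μ : ℝ → ℝ) : ℝ :=
  (∫ r in Set.Iic (0:ℝ), (mMeas l μ (Set.Ici r) - 1)) +
  (∫ r in Set.Ioi (0:ℝ), mMeas l μ (Set.Ici r))

/-- Membership function of the trapezoidal fuzzy variable `(r1,r2,r3,r4)`. -/
noncomputable def trapMF (r1 r2 r3 r4 : ℝ) : ℝ → ℝ := fun x =>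
  if r1 ≤ x ∧ x ≤ r2 then (x - r1) / (r2 - r1)
  else if r2 ≤ x ∧ x ≤ r3 then 1
  else if r3 ≤ x ∧ x ≤ r4 then (r4 - x) / (r4 - r3)
  else 0

/-- Membership function of the triangular fuzzy variable `(r1,r2,r4)`. -/
noncomputable def triMF (r1 r2 r4 : ℝ) : ℝ → ℝ := fun x =>
  if r1 ≤ x ∧ x ≤ r2 then (x - r1) / (r2 - r1)
  else if r2 ≤ x ∧ x ≤ r4 then (r4 - x) / (r4 - r2)
  else 0

/-- Membership function of the trapezoidal fuzzy variable `(a−α, a, b, b+β)`. -/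
noncomputable def trapMF2 (a b α β : ℝ) : ℝ → ℝ := fun x =>
  if a - α ≤ x ∧ x ≤ a then 1 - (a - x) / α
  else if a ≤ x ∧ x ≤ b then 1
  else if b ≤ x ∧ x ≤ b + β then 1 - (x - b) / β
  else 0

/-- Membership function of the triangular fuzzy variable `(a−α, a, a+β)`. -/
noncomputable def triMF2 (a α β : ℝ) : ℝ → ℝ := fun x =>
  if a - α ≤ x ∧ x ≤ a then 1 - (a - x) / α
  else if a ≤ x ∧ x ≤ a + β then 1 - (x - a) / β
  else 0

noncomputable def ramp (p q t : ℝ) : ℝ := max 0 (min 1 ((t - p) / (q - p)))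

section Ramp

variable {p q t : ℝ}

lemma ramp_of_le (h : t ≤ p) (hpq : p ≤ q) : ramp p q t = 0 := by
  have : (t - p) / (q - p) ≤ 0 := div_nonpos_of_nonpos_of_nonneg (by linarith) (by linarith)
  simp [ramp, this]

lemma ramp_of_ge (h : q ≤ t) (hpq : p < q) : ramp p q t = 1 := by
  have : 1 ≤ (t - p) / (q - p) := (one_le_div (by linarith)).2 (by linarith)
  simp [ramp, this]

lemma ramp_of_mem_Icc (h : t ∈ Icc p q) : ramp p q t = (t - p) / (q - p) := by
  have h0 : 0 ≤ (t - p) / (q - p) := div_nonneg (by linarith [h.1]) (by linarith [h.1, h.2])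
  have h1 : (t - p) / (q - p) ≤ 1 := div_le_one_of_le₀ (by linarith [h.2]) (by linarith [h.1, h.2])
  simp [ramp, h0, h1]

lemma ramp_nonneg : 0 ≤ ramp p q t := le_max_left _ _

lemma ramp_le_one : ramp p q t ≤ 1 := max_le zero_le_one (min_le_left _ _)

lemma ramp_mono (hpq : p ≤ q) : Monotone (ramp p q) := fun _ _ h =>
  max_le_max le_rfl (min_le_min le_rfl (div_le_div_of_nonneg_right (by linarith) (by linarith)))

@[fun_prop]
lemma continuous_ramp : Continuous (ramp p q) := by
  unfold ramp; fun_prop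

end Ramp

section Trapezoid

variable {a b α β t : ℝ}

lemma trapMF2_eq_min_ramp (hα : 0 < α) (hβ : 0 < β) (hab : a ≤ b) (x : ℝ) :
    trapMF2 a b α β x = min (ramp (a - α) a x) (1 - ramp b (b + β) x) := by
  have hα' : a - α < a := by linarith
  have hβ' : b < b + β := by linarith
  unfold trapMF2
  split_ifs with h₁ h₂ h₃
  · rw [ramp_of_le (by linarith [h₁.2]) hβ'.le, sub_zero, min_eq_left ramp_le_one,
      ramp_of_mem_Icc h₁, sub_sub_cancel]
    field_simp
    ring
  · rw [ramp_of_ge h₂.1 hα', ramp_of_le h₂.2 hβ'.le]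
    simp
  · rw [ramp_of_ge (by linarith [h₃.1]) hα', min_eq_right (sub_le_self _ ramp_nonneg),
      ramp_of_mem_Icc h₃, add_sub_cancel_left]
  · by_cases hxa : x ≤ a
    · have hx : x ≤ a - α := by by_contra! h; exact h₁ ⟨h.le, hxa⟩
      rw [ramp_of_le hx hα'.le, min_eq_left (sub_nonneg.2 ramp_le_one)]
    · have hx : b + β ≤ x := by
        by_contra! h
        exact h₃ ⟨not_lt.1 fun hxb => h₂ ⟨(not_le.1 hxa).le, hxb.le⟩, h.le⟩
      rw [ramp_of_ge hx hβ', sub_self, min_eq_right ramp_nonneg]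

lemma continuous_trapMF2 (hα : 0 < α) (hβ : 0 < β) (hab : a ≤ b) :
    Continuous (trapMF2 a b α β) := by
  simp_rw [funext (trapMF2_eq_min_ramp hα hβ hab)]
  fun_prop

lemma pos_trapMF2_Iic (hα : 0 < α) (hβ : 0 < β) (hab : a ≤ b) :
    Pos (trapMF2 a b α β) (Iic t) = ramp (a - α) a t := by
  have hα' : a - α < a := by linarith
  refine IsGreatest.csSup_eq ⟨⟨min t a, mem_Iic.2 (min_le_left _ _), ?_⟩, ?_⟩
  · rw [trapMF2_eq_min_ramp hα hβ hab, ramp_of_le ((min_le_right _ _).trans hab) (by linarith),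
      sub_zero, min_eq_left ramp_le_one]
    rcases le_total t a with h | h
    · rw [min_eq_left h]
    · rw [min_eq_right h, ramp_of_ge le_rfl hα', ramp_of_ge h hα']
  · rintro _ ⟨x, hx, rfl⟩
    rw [trapMF2_eq_min_ramp hα hβ hab]
    exact (min_le_left _ _).trans (ramp_mono hα'.le hx)

lemma pos_trapMF2_Ioi (hα : 0 < α) (hβ : 0 < β) (hab : a ≤ b) :
    Pos (trapMF2 a b α β) (Ioi t) = 1 - ramp b (b + β) t := by
  have hβ' : b < b + β := by linarith
  have hmax : trapMF2 a b α β (max t a) = 1 - ramp b (b + β) t := by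
    rw [trapMF2_eq_min_ramp hα hβ hab, ramp_of_ge (le_max_right _ _) (by linarith),
      min_eq_right (sub_le_self _ ramp_nonneg)]
    rcases le_total t a with h | h
    · rw [max_eq_right h, ramp_of_le hab hβ'.le, ramp_of_le (h.trans hab) hβ'.le]
    · rw [max_eq_left h]
  have hub : 1 - ramp b (b + β) t ∈ upperBounds (trapMF2 a b α β '' Ioi t) := by
    rintro _ ⟨x, hx, rfl⟩
    rw [trapMF2_eq_min_ramp hα hβ hab]
    exact (min_le_right _ _).trans (sub_le_sub_left (ramp_mono hβ'.le hx.le) 1)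
  -- The supremum over the open ray need not be attained, but by continuity it is the value at
  -- `max t a`, a point of the closure of the ray.
  have hcl : 1 - ramp b (b + β) t ∈ closure (trapMF2 a b α β '' Ioi t) := by
    rw [← hmax]
    refine (continuous_trapMF2 hα hβ hab).continuousWithinAt.mem_closure_image ?_
    rw [closure_Ioi]
    exact mem_Ici.2 (le_max_left t a)
  exact (isLUB_of_mem_closure hub hcl).csSup_eq (nonempty_Ioi.image _)

lemma mMeas_half_trapMF2_Iic (hα : 0 < α) (hβ : 0 < β) (hab : a ≤ b) :
    mMeas (1 / 2) (trapMF2 a b α β) (Iic t) = (ramp (a - α) a t + ramp b (b + β) t) / 2 := by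
  rw [mMeas, Nec, compl_Iic, pos_trapMF2_Iic hα hβ hab, pos_trapMF2_Ioi hα hβ hab]
  ring

end Trapezoid

section RampIntegral

variable {p q : ℝ}

lemma ramp_one_div_eq_zero (hp : 0 < p) (hpq : p ≤ q) {r : ℝ} (hr : 1 / p < r) :
    ramp p q (1 / r) = 0 :=
  ramp_of_le ((one_div_le ((one_div_pos.2 hp).trans hr) hp).2 hr.le) hpq

lemma integrableOn_ramp_one_div (hp : 0 < p) (hpq : p ≤ q) :
    IntegrableOn (fun r => ramp p q (1 / r)) (Ioi 0) := by
  have hbdd : IntegrableOn (fun r => ramp p q (1 / r)) (Ioc 0 (1 / p)) :=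
    Measure.integrableOn_of_bounded (M := 1) measure_Ioc_lt_top.ne (by fun_prop)
      (ae_of_all _ fun r => by simp [abs_of_nonneg ramp_nonneg, ramp_le_one])
  refine hbdd.of_forall_sdiff_eq_zero measurableSet_Ioi fun r hr => ?_
  exact ramp_one_div_eq_zero hp hpq (not_le.1 fun h => hr.2 ⟨hr.1, h⟩)

lemma integral_ramp_one_div (hp : 0 < p) (hpq : p < q) :
    ∫ r in Ioi 0, ramp p q (1 / r) = Real.log (q / p) / (q - p) := by
  have hq : 0 < q := hp.trans hpq
  have hqp : 1 / q ≤ 1 / p := one_div_le_one_div_of_le hp hpq.le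
  have hint : IntervalIntegrable (fun r => ramp p q (1 / r)) volume 0 (1 / p) :=
    (intervalIntegrable_iff_integrableOn_Ioc_of_le (by positivity)).2
      ((integrableOn_ramp_one_div hp hpq.le).mono_set Ioc_subset_Ioi_self)
  have hflat : ∫ r in (0)..(1 / q), ramp p q (1 / r) = 1 / q := by
    have hone : EqOn (fun r => ramp p q (1 / r)) 1 (Ioc 0 (1 / q)) := fun r hr =>
      ramp_of_ge ((le_one_div hq hr.1).2 hr.2) hpq
    rw [intervalIntegral.integral_of_le (by positivity),
      MeasureTheory.setIntegral_congr_fun measurableSet_Ioc hone]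
    simp [hq.le]
  have hslope : ∫ r in (1 / q)..(1 / p), ramp p q (1 / r) =
      Real.log (q / p) / (q - p) - 1 / q := by
    rw [intervalIntegral.integral_congr (g := fun r => (1 / r - p) / (q - p)) fun r hr => ?_]
    · have h0 : (0 : ℝ) ∉ uIcc (1 / q) (1 / p) := by
        rw [uIcc_of_le hqp]
        exact fun h => (one_div_pos.2 hq).not_ge h.1
      have hinv : IntervalIntegrable (fun r : ℝ => 1 / r) volume (1 / q) (1 / p) :=
        intervalIntegral.intervalIntegrable_one_div (fun r hr h => h0 (h ▸ hr)) continuousOn_id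
      rw [intervalIntegral.integral_div, intervalIntegral.integral_sub hinv
        intervalIntegrable_const, integral_one_div h0, intervalIntegral.integral_const, smul_eq_mul]
      field_simp [sub_ne_zero.2 hpq.ne']
    · rw [uIcc_of_le hqp] at hr
      have hr0 : 0 < r := (one_div_pos.2 hq).trans_le hr.1
      exact ramp_of_mem_Icc ⟨(le_one_div hp hr0).2 hr.2, (one_div_le hr0 hq).2 hr.1⟩
  rw [setIntegral_eq_of_subset_of_forall_sdiff_eq_zero measurableSet_Ioi Ioc_subset_Ioi_self
      fun r hr => ramp_one_div_eq_zero hp hpq.le (not_le.1 fun h => hr.2 ⟨hr.1, h⟩),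
    ← intervalIntegral.integral_of_le (by positivity),
    ← intervalIntegral.integral_add_adjacent_intervals (hint.mono_set ?_) (hint.mono_set ?_),
    hflat, hslope, add_sub_cancel]
  · exact uIcc_subset_uIcc left_mem_uIcc (mem_uIcc_of_le (by positivity) hqp)
  · exact uIcc_subset_uIcc (mem_uIcc_of_le (by positivity) hqp) right_mem_uIcc

end RampIntegral

lemma integral_mMeas_half_trapMF2_Iic_one_div {a b α β : ℝ} (hα : 0 < α) (hβ : 0 < β)
    (hpos : 0 < a - α) (hab : a ≤ b) :
    ∫ r in Ioi (0 : ℝ), mMeas (1 / 2) (trapMF2 a b α β) (Iic (1 / r)) =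
      (1 / α * Real.log (a / (a - α)) + 1 / β * Real.log ((b + β) / b)) / 2 := by
  have hb : 0 < b := by linarith
  simp_rw [mMeas_half_trapMF2_Iic hα hβ hab]
  rw [integral_div, integral_add (integrableOn_ramp_one_div hpos (by linarith))
    (integrableOn_ramp_one_div hb (by linarith)), integral_ramp_one_div hpos (by linarith),
    integral_ramp_one_div hb (by linarith), sub_sub_cancel, add_sub_cancel_left]
  ring

lemma mul_sub_half_mul_sq_le_of_mul_eq {k d x : ℝ} (hk : 0 < k) (hx : k * x = d) (y : ℝ) :
    d * y - k * y ^ 2 / 2 ≤ d * x - k * x ^ 2 / 2 := by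
  subst hx
  nlinarith [mul_nonneg hk.le (sq_nonneg (x - y))]

theorem stmt_13_general (n : ℕ)
    (d c hh a b α β e xs : Fin n → ℝ)
    (hhpos : ∀ i, 0 < hh i)
    (hα : ∀ i, 0 < α i) (hβ : ∀ i, 0 < β i)
    (hpos : ∀ i, 0 < a i - α i) (hab : ∀ i, a i ≤ b i)
    (he : ∀ i, e i =
      ∫ r in Set.Ioi (0:ℝ), mMeas (1/2) (trapMF2 (a i) (b i) (α i) (β i)) (Set.Iic (1 / r)))
    (hxs : ∀ i, xs i = 2 * d i / (hh i *
      (1 / α i * Real.log (a i / (a i - α i)) +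
        1 / β i * Real.log ((b i + β i) / b i)))) :
    ∀ y : Fin n → ℝ, (∀ i, 0 ≤ y i) →
      (∑ i, (d i * y i - c i - hh i * y i ^ 2 / 2 * e i)) ≤
      (∑ i, (d i * xs i - c i - hh i * xs i ^ 2 / 2 * e i)) := by
  intro y _
  refine Finset.sum_le_sum fun i _ => ?_
  have hb : 0 < b i := by linarith [hpos i, hα i, hab i]
  have hei := (he i).trans
    (integral_mMeas_half_trapMF2_Iic_one_div (hα i) (hβ i) (hpos i) (hab i))
  have hxi := hxs i
  set K := 1 / α i * Real.log (a i / (a i - α i)) + 1 / β i * Real.log ((b i + β i) / b i)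
  have hK : 0 < K := by
    have hl : 0 < Real.log (a i / (a i - α i)) :=
      Real.log_pos ((one_lt_div (hpos i)).2 (by linarith [hα i]))
    have hr : 0 < Real.log ((b i + β i) / b i) :=
      Real.log_pos ((one_lt_div hb).2 (by linarith [hβ i]))
    have := hα i
    have := hβ i
    positivity
  clear_value K
  have hvertex : hh i * e i * xs i = d i := by
    rw [hxi, hei]
    field_simp [(hhpos i).ne', hK.ne']
  have hk : 0 < hh i * e i := mul_pos (hhpos i) (by rw [hei]; positivity)
  linarith [mul_sub_half_mul_sq_le_of_mul_eq hk hvertex (y i)]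

theorem stmt_13 (n : ℕ) (hn : 1 ≤ n)
    (d c hh a b α β e xs : Fin n → ℝ)
    (hd : ∀ i, 0 ≤ d i) (hhpos : ∀ i, 0 < hh i)
    (hα : ∀ i, 0 < α i) (hβ : ∀ i, 0 < β i)
    (hpos : ∀ i, 0 < a i - α i) (hab : ∀ i, a i ≤ b i)
    (he : ∀ i, e i =
      ∫ r in Set.Ioi (0:ℝ), mMeas (1/2) (trapMF2 (a i) (b i) (α i) (β i)) (Set.Iic (1 / r)))
    (hxs : ∀ i, xs i = 2 * d i / (hh i *
      (1 / α i * Real.log (a i / (a i - α i)) +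
        1 / β i * Real.log ((b i + β i) / b i)))) :
    ∀ y : Fin n → ℝ, (∀ i, 0 ≤ y i) →
      (∑ i, (d i * y i - c i - hh i * y i ^ 2 / 2 * e i)) ≤
      (∑ i, (d i * xs i - c i - hh i * xs i ^ 2 / 2 * e i)) :=
  stmt_13_general n d c hh a b α β e xs hhpos hα hβ hpos hab he hxs
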